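/- Let Γ be a group, f : Γ → ℂ a parallelogram function, a ∈ Γ, and b₁, c₁, …, b_q, c_q ∈ Γ such that the product of commutators ∏_{i=1}^{q} bᵢcᵢbᵢ⁻¹cᵢ⁻¹ equals 1 in Γ. Then ∑_{i=1}^{q} f∘ε₃(a, bᵢ, cᵢ) = 0. -/

import Mathlib

/-- The linearization of `f : Γ → ℂ` to a linear functional on the group algebra `ℂ[Γ]`. -/
noncomputable def lin {Γ : Type*} [Group Γ] (f : Γ → ℂ) : MonoidAlgebra ℂ Γ →ₗ[ℂ] ℂ :=
  Finsupp.linearCombination ℂ f ∘ₗ (MonoidAlgebra.coeffLinearEquiv ℂ).toLinearMap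

/-- `f∘ε₃(a,b,c) = f̂((a-1)(b-1)(c-1))`. -/
noncomputable def eps3 {Γ : Type*} [Group Γ] (f : Γ → ℂ) (a b c : Γ) : ℂ :=
  lin f ((MonoidAlgebra.of ℂ Γ a - 1) * (MonoidAlgebra.of ℂ Γ b - 1) *
    (MonoidAlgebra.of ℂ Γ c - 1))

section PG

variable {Γ : Type*} [Group Γ]

lemma lin_of (f : Γ → ℂ) (g : Γ) : lin f (MonoidAlgebra.of ℂ Γ g) = f g := by
  show Finsupp.linearCombination ℂ f (MonoidAlgebra.coeffLinearEquiv ℂ (MonoidAlgebra.of ℂ Γ g)) = f g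
  simp

lemma lin_one (f : Γ → ℂ) : lin f (1 : MonoidAlgebra ℂ Γ) = f 1 := by
  show Finsupp.linearCombination ℂ f (MonoidAlgebra.coeffLinearEquiv ℂ (1 : MonoidAlgebra ℂ Γ)) = f 1
  simp [MonoidAlgebra.one_def]

lemma eps3_eq (f : Γ → ℂ) (a b c : Γ) :
    eps3 f a b c = f (a * b * c) - f (a * b) - f (a * c) - f (b * c)
      + f a + f b + f c - f 1 := by
  have expand : (MonoidAlgebra.of ℂ Γ a - 1) * (MonoidAlgebra.of ℂ Γ b - 1) *
      (MonoidAlgebra.of ℂ Γ c - 1)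
      = MonoidAlgebra.of ℂ Γ (a * b * c) - MonoidAlgebra.of ℂ Γ (a * b)
        - MonoidAlgebra.of ℂ Γ (a * c) - MonoidAlgebra.of ℂ Γ (b * c)
        + MonoidAlgebra.of ℂ Γ a + MonoidAlgebra.of ℂ Γ b + MonoidAlgebra.of ℂ Γ c - 1 := by
    simp only [map_mul]; noncomm_ring
  simp only [eps3, expand, map_sub, map_add, lin_of, lin_one]

variable (f : Γ → ℂ)

lemma f_one (hf : ∀ x y : Γ, f (x * y) + f (x * y⁻¹) = 2 * f x + 2 * f y) :
    f 1 = 0 := by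
  have h := hf 1 1
  simp only [one_mul, inv_one, mul_one] at h
  linear_combination (-1/2 : ℂ) * h

lemma f_inv (hf : ∀ x y : Γ, f (x * y) + f (x * y⁻¹) = 2 * f x + 2 * f y) (x : Γ) :
    f x⁻¹ = f x := by
  have h := hf 1 x
  simp only [one_mul] at h
  linear_combination h + 2 * f_one f hf

lemma f_comm (hf : ∀ x y : Γ, f (x * y) + f (x * y⁻¹) = 2 * f x + 2 * f y) (x y : Γ) :
    f (x * y) = f (y * x) := by
  have h1 := hf x y
  have h2 := hf y x
  have h3 : f (y * x⁻¹) = f (x * y⁻¹) := by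
    have := f_inv f hf (x * y⁻¹)
    rwa [mul_inv_rev, inv_inv] at this
  linear_combination h1 - h2 + h3

/-- `φ_a(g) = f(ag) - f(a) - f(g)`. -/
def pgPhi (f : Γ → ℂ) (a g : Γ) : ℂ := f (a * g) - f a - f g

variable (hf : ∀ x y : Γ, f (x * y) + f (x * y⁻¹) = 2 * f x + 2 * f y) (a : Γ)

include hf

lemma phi_one : pgPhi f a 1 = 0 := by
  simp [pgPhi, f_one f hf]

lemma lemP (u v : Γ) : pgPhi f a (u * v) + pgPhi f a (u * v⁻¹) = 2 * pgPhi f a u := by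
  have h1 := hf (a * u) v
  have h2 := hf u v
  simp only [pgPhi, ← mul_assoc]
  linear_combination h1 - h2

lemma phi_inv (v : Γ) : pgPhi f a v⁻¹ = -pgPhi f a v := by
  have h := lemP f hf a 1 v
  rw [one_mul, one_mul, phi_one f hf a] at h
  linear_combination h

lemma lemQ (u v : Γ) : pgPhi f a (u * v) + pgPhi f a (u⁻¹ * v) = 2 * pgPhi f a v := by
  have t1 := f_comm f hf (a * u) v
  have t2 := f_comm f hf (a * u⁻¹) v
  have h1 := hf (v * a) u
  have t3 := f_comm f hf u v
  have t4 := f_comm f hf u⁻¹ v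
  have h2 := hf v u
  have t5 := f_comm f hf v a
  simp only [← mul_assoc] at t1 t2 h1 t3 t4 h2 t5
  simp only [pgPhi, ← mul_assoc]
  linear_combination t1 + t2 + h1 - t3 - t4 - h2 + 2 * t5

lemma lemStar (u v : Γ) :
    pgPhi f a (u * v) + pgPhi f a (v * u) = 2 * pgPhi f a u + 2 * pgPhi f a v := by
  have hQ := lemQ f hf a u v
  have hP := lemP f hf a u⁻¹ v
  have hI : pgPhi f a (u⁻¹ * v⁻¹) = -pgPhi f a (v * u) := by
    have := phi_inv f hf a (v * u)
    rwa [mul_inv_rev] at this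
  have hIu := phi_inv f hf a u
  linear_combination hQ - hP + hI - 2 * hIu

lemma lemE0 (u v w : Γ) :
    pgPhi f a (u * v * w) + pgPhi f a u + pgPhi f a v + pgPhi f a w
      = pgPhi f a (u * v) + pgPhi f a (u * w) + pgPhi f a (v * w) := by
  have s1 := lemStar f hf a u (v * w)
  have s2 := lemStar f hf a (u * v) w
  have s3 := lemStar f hf a v (w * u)
  have s4 := lemStar f hf a w u
  simp only [← mul_assoc] at s1 s2 s3
  linear_combination (s1 + s2 - s3) / 2 - s4

/-- `D_a(u,v) = φ_a(uv) - φ_a(u) - φ_a(v)`. -/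
def pgD (f : Γ → ℂ) (a u v : Γ) : ℂ := pgPhi f a (u * v) - pgPhi f a u - pgPhi f a v

lemma Dadd (u v w : Γ) : pgD f a (u * v) w = pgD f a u w + pgD f a v w := by
  simp only [pgD]
  linear_combination lemE0 f hf a u v w

lemma Dinv_left (u v : Γ) : pgD f a u⁻¹ v = -pgD f a u v := by
  simp only [pgD]
  linear_combination lemQ f hf a u v - phi_inv f hf a u

lemma Dinv_right (u v : Γ) : pgD f a u v⁻¹ = -pgD f a u v := by
  simp only [pgD]
  linear_combination lemP f hf a u v - phi_inv f hf a v

lemma Dself (u : Γ) : pgD f a u u = 0 := by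
  have hP := lemP f hf a u u
  rw [mul_inv_cancel, phi_one f hf a] at hP
  simp only [pgD]
  linear_combination hP

lemma Dantisym (u v : Γ) : pgD f a v u = -pgD f a u v := by
  simp only [pgD]
  linear_combination lemStar f hf a u v

omit hf in
lemma phi_mul (x y : Γ) : pgPhi f a (x * y) = pgD f a x y + pgPhi f a x + pgPhi f a y := by
  simp only [pgD]; ring

lemma Dcomm_eq (x y : Γ) : pgPhi f a (x * y * x⁻¹ * y⁻¹) = 2 * pgD f a x y := by
  have c1 := phi_mul f a (x * y * x⁻¹) y⁻¹
  have c2 := phi_mul f a (x * y) x⁻¹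
  have z1 : pgD f a (x * y * x⁻¹) y⁻¹ = 0 := by
    rw [Dinv_right f hf a (x * y * x⁻¹) y, Dadd f hf a (x * y) x⁻¹ y,
      Dadd f hf a x y y, Dself f hf a y, Dinv_left f hf a x y]
    ring
  have z2 : pgD f a (x * y) x⁻¹ = pgD f a x y := by
    rw [Dinv_right f hf a (x * y) x, Dadd f hf a x y x, Dself f hf a x,
      Dantisym f hf a x y]
    ring
  rw [c1, z1, c2, z2, phi_inv f hf a x, phi_inv f hf a y]
  simp only [pgD]
  ring

lemma Dcomm_zero (x y v : Γ) : pgD f a (x * y * x⁻¹ * y⁻¹) v = 0 := by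
  rw [Dadd f hf a (x * y * x⁻¹) y⁻¹ v, Dadd f hf a (x * y) x⁻¹ v, Dadd f hf a x y v,
    Dinv_left f hf a x v, Dinv_left f hf a y v]
  ring

lemma phi_list (l : List Γ) (h : ∀ g ∈ l, ∀ v, pgD f a g v = 0) :
    pgPhi f a l.prod = (l.map (pgPhi f a)).sum ∧ ∀ v, pgD f a l.prod v = 0 := by
  induction l with
  | nil =>
    constructor
    · simp [phi_one f hf a]
    · intro v
      simp [pgD, phi_one f hf a]
  | cons g t ih =>
    have hg := h g (by simp)
    have ht : ∀ g' ∈ t, ∀ v, pgD f a g' v = 0 := fun g' hg' v => h g' (by simp [hg']) v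
    obtain ⟨ih1, ih2⟩ := ih ht
    constructor
    · have hD := hg t.prod
      simp only [pgD] at hD
      simp only [List.prod_cons, List.map_cons, List.sum_cons]
      linear_combination hD + ih1
    · intro v
      rw [List.prod_cons, Dadd f hf a g t.prod v, hg v, ih2 v]
      ring

lemma eps3_D (b c : Γ) : eps3 f a b c = pgD f a b c := by
  rw [eps3_eq]
  simp only [pgD, pgPhi, ← mul_assoc]
  rw [f_one f hf]
  ring

end PG

theorem eps3_vanishes_on_commutator_relations {Γ : Type*} [Group Γ] (f : Γ → ℂ)
    (hf : ∀ x y : Γ, f (x * y) + f (x * y⁻¹) = 2 * f x + 2 * f y)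
    (a : Γ) (q : ℕ) (b c : Fin q → Γ)
    (hprod : (List.ofFn fun i => b i * c i * (b i)⁻¹ * (c i)⁻¹).prod = 1) :
    ∑ i : Fin q, eps3 f a (b i) (c i) = 0 := by
  have key := phi_list f hf a (List.ofFn fun i => b i * c i * (b i)⁻¹ * (c i)⁻¹) ?_
  · obtain ⟨h1, -⟩ := key
    rw [hprod, phi_one f hf a, List.map_ofFn, List.sum_ofFn] at h1
    simp only [Function.comp] at h1
    calc ∑ i : Fin q, eps3 f a (b i) (c i)
        = ∑ i : Fin q, (1/2 : ℂ) * pgPhi f a (b i * c i * (b i)⁻¹ * (c i)⁻¹) := by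
          refine Finset.sum_congr rfl fun i _ => ?_
          rw [eps3_D f hf a (b i) (c i), Dcomm_eq f hf a (b i) (c i)]
          ring
      _ = (1/2 : ℂ) * ∑ i : Fin q, pgPhi f a (b i * c i * (b i)⁻¹ * (c i)⁻¹) := by
          rw [Finset.mul_sum]
      _ = 0 := by rw [← h1]; ring
  · intro g hg
    rw [List.mem_ofFn] at hg
    obtain ⟨i, rfl⟩ := hg
    exact Dcomm_zero f hf a (b i) (c i)
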